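/- arXiv:2102.02563 — 2 statements merged into one kernel-verified Lean document; each statement's English description precedes it below -/
import Mathlib

section
/- Consider the network slicing problem (NS) with path set P = {1, ..., P} where P ≥ 1. Suppose (x, y, r, r', z, θ) is a feasible point of (NS), i.e.: x_{v,s}(k), y_v ∈ {0,1}; z_{ij}(k,s,p) ∈ {0,1}; r(k,s,p), r'_{ij}(k,s,p), θ(k,s) ≥ 0; and the constraints (1) Σ_{v∈V} x_{v,s}(k) = 1 for all k ∈ K, s ∈ F(k); (2) x_{v,s}(k) ≤ y_v; (3) Σ_{k∈K} Σ_{s∈F(k)} λ_s(k) x_{v,s}(k) ≤ μ_v y_v for all v ∈ V; (4) Σ_{p∈P} r(k,s,p) = 1 for all k ∈ K, s ∈ F(k) ∪ {0}; (5) r'_{ij}(k,s,p) = r(k,s,p) z_{ij}(k,s,p) for all (i,j) ∈ L, k, s, p; (6) Σ_{k} Σ_{s} Σ_{p} λ_s(k) r'_{ij}(k,s,p) ≤ C_{ij} for all (i,j) ∈ L; (7) Σ_{j:(j,i)∈L} z_{ji}(k,s,p) − Σ_{j:(i,j)∈L} z_{ij}(k,s,p) = b_i(k,s,x) for all i ∈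 I, k, s, p, where b_i(k,s,x) = 0 if i ∈ I∖V and b_i(k,s,x) = x_{i,s+1}(k) − x_{i,s}(k) if i ∈ V; (8) θ(k,s) ≥ Σ_{(i,j)∈L} d_{ij} z_{ij}(k,s,p) for all k, s ∈ F(k) ∪ {0}, p ∈ P; and (9) θ_N(k) + θ_L(k) ≤ Θ_k for all k ∈ K, where θ_N(k) = Σ_{v∈V} Σ_{s∈F(k)} d_{v,s}(k) x_{v,s}(k) and θ_L(k) = Σ_{s∈F(k)∪{0}} θ(k,s). Define z̄_{ij}(k,s) := Σ_{p∈P} r'_{ij}(k,s,p) for every (i,j) ∈ L, k ∈ K, s ∈ F(k) ∪ {0}. Then (x, y, z̄, θ) is a feasible point of the compact LP relaxation (NS-LP), i.e.: x_{v,s}(k), y_v, z̄_{ij}(k,s) ∈ [0,1]; θ(k,s) ≥ 0; constraints (1), (2), (3), (9) hold; (6') Σ_{k} Σ_{s∈F(k)∪{0}} λ_s(k) z̄_{ij}(k,s) ≤ C_{ij} for all (i,j) ∈ L; (7') Σ_{j:(j,i)∈L} z̄_{ji}(k,s) − Σ_{j:(i,j)∈L} z̄_{ij}(k,s) = b_i(k,s,x)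 for all i ∈ I, k, s; and (8') θ(k,s) ≥ Σ_{(i,j)∈L} d_{ij} z̄_{ij}(k,s) for all k, s ∈ F(k) ∪ {0}. Moreover, the objective value Σ_{v∈V} y_v + σ Σ_{k∈K} (θ_L(k) + θ_N(k)) is the same for both points. -/
open Finset

/-- The right-hand side `b_i(k,s,x)` of the flow-conservation constraint: `0` if `i ∉ V`,
and `x_{i,s+1}(k) - x_{i,s}(k)` if `i ∈ V`, where the boundary values `x_{i,0}(k)` and
`x_{i,ℓ_k+1}(k)` are the fixed constants `xB i k` (source indicator) and `xE i k`
(destination indicator), respectively. -/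
def flowRHS {I K : Type} [DecidableEq I] (V : Finset I) (ℓ : K → ℕ)
    (xB xE : I → K → ℝ) (x : I → ℕ → K → ℝ) (i : I) (k : K) (s : ℕ) : ℝ :=
  if i ∈ V then
    (if s + 1 = ℓ k + 1 then xE i k else x i (s + 1) k)
      - (if s = 0 then xB i k else x i s k)
  else 0

/-- If `(x, y, r, r', z, θ)` is a feasible point of the network slicing problem
(NS) with path set `P = {1,…,P}`, `P ≥ 1`, then setting
`z̄_{ij}(k,s) := ∑_{p ∈ P} r'_{ij}(k,s,p)` yields a point `(x, y, z̄, θ)` that is feasible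
for the compact LP relaxation (NS-LP), and the objective value
`∑_{v ∈ V} y_v + σ ∑_{k ∈ K} (θ_L(k) + θ_N(k))` is the same for both points.

Here `F(k) = Icc 1 (ℓ k)`, `F(k) ∪ {0} = range (ℓ k + 1)`, the path set is `Icc 1 P`,
`θ_N(k) = ∑_{v ∈ V} ∑_{s ∈ F(k)} dN v s k * x v s k`, and
`θ_L(k) = ∑_{s ∈ F(k) ∪ {0}} θ k s`. -/
theorem ns_feasible_to_nslp_feasible
    {I K : Type} [Fintype I] [DecidableEq I] [Fintype K]
    (L : Finset (I × I)) (V : Finset I)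
    (ℓ : K → ℕ) (lam : K → ℕ → ℝ) (Θ : K → ℝ)
    (μ : I → ℝ) (C : I × I → ℝ) (d : I × I → ℝ) (dN : I → ℕ → K → ℝ)
    (σ : ℝ) (P : ℕ) (hP : 1 ≤ P)
    (xB xE : I → K → ℝ)
    -- nonnegativity of the problem data
    (hlam : ∀ (k : K), ∀ s ∈ range (ℓ k + 1), 0 ≤ lam k s)
    (hμ : ∀ v ∈ V, 0 ≤ μ v)
    (hC : ∀ e ∈ L, 0 ≤ C e)
    (hd : ∀ e ∈ L, 0 ≤ d e)
    (hdN : ∀ v ∈ V, ∀ (k : K), ∀ s ∈ Icc 1 (ℓ k), 0 ≤ dN v s k)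
    (hσ : 0 ≤ σ)
    -- the variables of (NS)
    (x : I → ℕ → K → ℝ) (y : I → ℝ)
    (r : K → ℕ → ℕ → ℝ) (r' : I × I → K → ℕ → ℕ → ℝ)
    (z : I × I → K → ℕ → ℕ → ℝ) (θ : K → ℕ → ℝ)
    -- binary and nonnegativity restrictions of (NS)
    (hx01 : ∀ v ∈ V, ∀ (k : K), ∀ s ∈ Icc 1 (ℓ k), x v s k = 0 ∨ x v s k = 1)
    (hy01 : ∀ v ∈ V, y v = 0 ∨ y v = 1)
    (hz01 : ∀ e ∈ L, ∀ (k : K), ∀ s ∈ range (ℓ k + 1), ∀ p ∈ Icc 1 P,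
      z e k s p = 0 ∨ z e k s p = 1)
    (hrpos : ∀ (k : K), ∀ s ∈ range (ℓ k + 1), ∀ p ∈ Icc 1 P, 0 ≤ r k s p)
    (hr'pos : ∀ e ∈ L, ∀ (k : K), ∀ s ∈ range (ℓ k + 1), ∀ p ∈ Icc 1 P, 0 ≤ r' e k s p)
    (hθpos : ∀ (k : K), ∀ s ∈ range (ℓ k + 1), 0 ≤ θ k s)
    -- constraint (1)
    (h1 : ∀ (k : K), ∀ s ∈ Icc 1 (ℓ k), ∑ v ∈ V, x v s k = 1)
    -- constraint (2)
    (h2 : ∀ v ∈ V, ∀ (k : K), ∀ s ∈ Icc 1 (ℓ k), x v s k ≤ y v)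
    -- constraint (3)
    (h3 : ∀ v ∈ V, ∑ k, ∑ s ∈ Icc 1 (ℓ k), lam k s * x v s k ≤ μ v * y v)
    -- constraint (4)
    (h4 : ∀ (k : K), ∀ s ∈ range (ℓ k + 1), ∑ p ∈ Icc 1 P, r k s p = 1)
    -- constraint (5)
    (h5 : ∀ e ∈ L, ∀ (k : K), ∀ s ∈ range (ℓ k + 1), ∀ p ∈ Icc 1 P,
      r' e k s p = r k s p * z e k s p)
    -- constraint (6)
    (h6 : ∀ e ∈ L,
      ∑ k, ∑ s ∈ range (ℓ k + 1), ∑ p ∈ Icc 1 P, lam k s * r' e k s p ≤ C e)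
    -- constraint (7)
    (h7 : ∀ (i : I), ∀ (k : K), ∀ s ∈ range (ℓ k + 1), ∀ p ∈ Icc 1 P,
      (∑ e ∈ L.filter (fun e => e.2 = i), z e k s p)
        - (∑ e ∈ L.filter (fun e => e.1 = i), z e k s p)
        = flowRHS V ℓ xB xE x i k s)
    -- constraint (8)
    (h8 : ∀ (k : K), ∀ s ∈ range (ℓ k + 1), ∀ p ∈ Icc 1 P,
      ∑ e ∈ L, d e * z e k s p ≤ θ k s)
    -- constraint (9)
    (h9 : ∀ k : K,
      (∑ v ∈ V, ∑ s ∈ Icc 1 (ℓ k), dN v s k * x v s k)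
        + (∑ s ∈ range (ℓ k + 1), θ k s) ≤ Θ k) :
    -- (x, y, z̄, θ) with z̄ e k s = ∑ p ∈ Icc 1 P, r' e k s p is feasible for (NS-LP):
    -- variable bounds
    (∀ v ∈ V, ∀ (k : K), ∀ s ∈ Icc 1 (ℓ k), x v s k ∈ Set.Icc (0 : ℝ) 1) ∧
    (∀ v ∈ V, y v ∈ Set.Icc (0 : ℝ) 1) ∧
    (∀ e ∈ L, ∀ (k : K), ∀ s ∈ range (ℓ k + 1),
      (∑ p ∈ Icc 1 P, r' e k s p) ∈ Set.Icc (0 : ℝ) 1) ∧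
    (∀ (k : K), ∀ s ∈ range (ℓ k + 1), 0 ≤ θ k s) ∧
    -- constraint (1)
    (∀ (k : K), ∀ s ∈ Icc 1 (ℓ k), ∑ v ∈ V, x v s k = 1) ∧
    -- constraint (2)
    (∀ v ∈ V, ∀ (k : K), ∀ s ∈ Icc 1 (ℓ k), x v s k ≤ y v) ∧
    -- constraint (3)
    (∀ v ∈ V, ∑ k, ∑ s ∈ Icc 1 (ℓ k), lam k s * x v s k ≤ μ v * y v) ∧
    -- constraint (6')
    (∀ e ∈ L,
      ∑ k, ∑ s ∈ range (ℓ k + 1), lam k s * (∑ p ∈ Icc 1 P, r' e k s p) ≤ C e) ∧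
    -- constraint (7')
    (∀ (i : I), ∀ (k : K), ∀ s ∈ range (ℓ k + 1),
      (∑ e ∈ L.filter (fun e => e.2 = i), ∑ p ∈ Icc 1 P, r' e k s p)
        - (∑ e ∈ L.filter (fun e => e.1 = i), ∑ p ∈ Icc 1 P, r' e k s p)
        = flowRHS V ℓ xB xE x i k s) ∧
    -- constraint (8')
    (∀ (k : K), ∀ s ∈ range (ℓ k + 1),
      ∑ e ∈ L, d e * (∑ p ∈ Icc 1 P, r' e k s p) ≤ θ k s) ∧
    -- constraint (9)
    (∀ k : K,
      (∑ v ∈ V, ∑ s ∈ Icc 1 (ℓ k), dN v s k * x v s k)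
        + (∑ s ∈ range (ℓ k + 1), θ k s) ≤ Θ k) ∧
    -- the objective values of the two points coincide
    ((∑ v ∈ V, y v)
        + σ * ∑ k, ((∑ s ∈ range (ℓ k + 1), θ k s)
          + (∑ v ∈ V, ∑ s ∈ Icc 1 (ℓ k), dN v s k * x v s k))
      = (∑ v ∈ V, y v)
        + σ * ∑ k, ((∑ s ∈ range (ℓ k + 1), θ k s)
          + (∑ v ∈ V, ∑ s ∈ Icc 1 (ℓ k), dN v s k * x v s k))) := by
  -- basic facts
  have hr'le : ∀ e ∈ L, ∀ (k : K), ∀ s ∈ range (ℓ k + 1), ∀ p ∈ Icc 1 P,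
      r' e k s p ≤ r k s p := by
    intro e he k s hs p hp
    rw [h5 e he k s hs p hp]
    rcases hz01 e he k s hs p hp with h | h <;> simp [h]
    exact hrpos k s hs p hp
  refine ⟨?_, ?_, ?_, hθpos, h1, h2, h3, ?_, ?_, ?_, h9, rfl⟩
  · -- x ∈ [0,1]
    intro v hv k s hs
    rcases hx01 v hv k s hs with h | h <;> simp [h]
  · -- y ∈ [0,1]
    intro v hv
    rcases hy01 v hv with h | h <;> simp [h]
  · -- z̄ ∈ [0,1]
    intro e he k s hs
    constructor
    · exact Finset.sum_nonneg fun p hp => hr'pos e he k s hs p hp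
    · calc ∑ p ∈ Icc 1 P, r' e k s p ≤ ∑ p ∈ Icc 1 P, r k s p :=
            Finset.sum_le_sum fun p hp => hr'le e he k s hs p hp
        _ = 1 := h4 k s hs
  · -- (6')
    intro e he
    calc ∑ k, ∑ s ∈ range (ℓ k + 1), lam k s * ∑ p ∈ Icc 1 P, r' e k s p
        = ∑ k, ∑ s ∈ range (ℓ k + 1), ∑ p ∈ Icc 1 P, lam k s * r' e k s p := by
          simp [Finset.mul_sum]
      _ ≤ C e := h6 e he
  · -- (7')
    intro i k s hs
    have key : ∀ e ∈ L, ∑ p ∈ Icc 1 P, r' e k s p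
        = ∑ p ∈ Icc 1 P, r k s p * z e k s p := by
      intro e he
      exact Finset.sum_congr rfl fun p hp => h5 e he k s hs p hp
    have hin : ∑ e ∈ L.filter (fun e => e.2 = i), ∑ p ∈ Icc 1 P, r' e k s p
        = ∑ p ∈ Icc 1 P, r k s p * ∑ e ∈ L.filter (fun e => e.2 = i), z e k s p := by
      rw [Finset.sum_comm]
      refine Finset.sum_congr rfl fun p hp => ?_
      rw [Finset.mul_sum]
      exact Finset.sum_congr rfl fun e he =>
        h5 e (Finset.mem_of_mem_filter e he) k s hs p hp
    have hout : ∑ e ∈ L.filter (fun e => e.1 = i), ∑ p ∈ Icc 1 P, r' e k s p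
        = ∑ p ∈ Icc 1 P, r k s p * ∑ e ∈ L.filter (fun e => e.1 = i), z e k s p := by
      rw [Finset.sum_comm]
      refine Finset.sum_congr rfl fun p hp => ?_
      rw [Finset.mul_sum]
      exact Finset.sum_congr rfl fun e he =>
        h5 e (Finset.mem_of_mem_filter e he) k s hs p hp
    rw [hin, hout, ← Finset.sum_sub_distrib]
    calc ∑ p ∈ Icc 1 P,
          (r k s p * ∑ e ∈ L.filter (fun e => e.2 = i), z e k s p
            - r k s p * ∑ e ∈ L.filter (fun e => e.1 = i), z e k s p)
        = ∑ p ∈ Icc 1 P, r k s p * flowRHS V ℓ xB xE x i k s := by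
          refine Finset.sum_congr rfl fun p hp => ?_
          rw [← mul_sub, h7 i k s hs p hp]
      _ = (∑ p ∈ Icc 1 P, r k s p) * flowRHS V ℓ xB xE x i k s := by
          rw [Finset.sum_mul]
      _ = flowRHS V ℓ xB xE x i k s := by rw [h4 k s hs, one_mul]
  · -- (8')
    intro k s hs
    calc ∑ e ∈ L, d e * ∑ p ∈ Icc 1 P, r' e k s p
        = ∑ p ∈ Icc 1 P, r k s p * ∑ e ∈ L, d e * z e k s p := by
          have : ∑ e ∈ L, d e * ∑ p ∈ Icc 1 P, r' e k s p
              = ∑ e ∈ L, ∑ p ∈ Icc 1 P, d e * r' e k s p := by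
            simp [Finset.mul_sum]
          rw [this, Finset.sum_comm]
          refine Finset.sum_congr rfl fun p hp => ?_
          rw [Finset.mul_sum]
          refine Finset.sum_congr rfl fun e he => ?_
          rw [h5 e he k s hs p hp]; ring
      _ ≤ ∑ p ∈ Icc 1 P, r k s p * θ k s := by
          refine Finset.sum_le_sum fun p hp => ?_
          exact mul_le_mul_of_nonneg_left (h8 k s hs p hp) (hrpos k s hs p hp)
      _ = (∑ p ∈ Icc 1 P, r k s p) * θ k s := by rw [Finset.sum_mul]
      _ = θ k s := by rw [h4 k s hs, one_mul]
end

section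
/- For any integer P ≥ 1, the optimal value of the compact LP relaxation (NS-LP) is less than or equal to the optimal value of the network slicing problem (NS) with path set P = {1,...,P}: that is, the infimum of the objective Σ_{v∈V} y_v + σ Σ_{k∈K} (θ_L(k) + θ_N(k)) over the feasible set of (NS-LP) is at most its infimum over the feasible set of (NS). In other words, (NS-LP) is a relaxation of (NS) for any P ≥ 1. -/
open Finset

/-- The total NFV delay `θ_N(k) = ∑_{v ∈ V} ∑_{s ∈ F(k)} d_{v,s}(k) x_{v,s}(k)`. -/
def thetaN {I K : Type} (V : Finset I) (ℓ : K → ℕ) (dN : I → ℕ → K → ℝ)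
    (x : I → ℕ → K → ℝ) (k : K) : ℝ :=
  ∑ v ∈ V, ∑ s ∈ Icc 1 (ℓ k), dN v s k * x v s k

/-- The total communication delay `θ_L(k) = ∑_{s ∈ F(k) ∪ {0}} θ(k,s)`. -/
def thetaL {K : Type} (ℓ : K → ℕ) (θ : K → ℕ → ℝ) (k : K) : ℝ :=
  ∑ s ∈ range (ℓ k + 1), θ k s

/-- The common objective `∑_{v ∈ V} y_v + σ ∑_{k ∈ K} (θ_L(k) + θ_N(k))` of (NS) and
(NS-LP). -/
def nsObjective {I K : Type} [Fintype K] (V : Finset I) (ℓ : K → ℕ)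
    (dN : I → ℕ → K → ℝ) (σ : ℝ) (x : I → ℕ → K → ℝ) (y : I → ℝ)
    (θ : K → ℕ → ℝ) : ℝ :=
  (∑ v ∈ V, y v) + σ * ∑ k, (thetaL ℓ θ k + thetaN V ℓ dN x k)

/-- Feasibility of `(x, y, r, r', z, θ)` for the network slicing problem (NS) with path
set `{1,…,P}`: binary restrictions on `x`, `y`, `z`, nonnegativity of `r`, `r'`, `θ`,
and constraints (1)–(9). Here `F(k) = Icc 1 (ℓ k)` and `F(k) ∪ {0} = range (ℓ k + 1)`. -/
def NSFeasible {I K : Type} [Fintype I] [DecidableEq I] [Fintype K]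
    (L : Finset (I × I)) (V : Finset I)
    (ℓ : K → ℕ) (lam : K → ℕ → ℝ) (Θ : K → ℝ)
    (μ : I → ℝ) (C : I × I → ℝ) (d : I × I → ℝ) (dN : I → ℕ → K → ℝ)
    (P : ℕ) (xB xE : I → K → ℝ)
    (x : I → ℕ → K → ℝ) (y : I → ℝ)
    (r : K → ℕ → ℕ → ℝ) (r' : I × I → K → ℕ → ℕ → ℝ)
    (z : I × I → K → ℕ → ℕ → ℝ) (θ : K → ℕ → ℝ) : Prop :=
  (∀ v ∈ V, ∀ (k : K), ∀ s ∈ Icc 1 (ℓ k), x v s k = 0 ∨ x v s k = 1) ∧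
  (∀ v ∈ V, y v = 0 ∨ y v = 1) ∧
  (∀ e ∈ L, ∀ (k : K), ∀ s ∈ range (ℓ k + 1), ∀ p ∈ Icc 1 P,
    z e k s p = 0 ∨ z e k s p = 1) ∧
  (∀ (k : K), ∀ s ∈ range (ℓ k + 1), ∀ p ∈ Icc 1 P, 0 ≤ r k s p) ∧
  (∀ e ∈ L, ∀ (k : K), ∀ s ∈ range (ℓ k + 1), ∀ p ∈ Icc 1 P, 0 ≤ r' e k s p) ∧
  (∀ (k : K), ∀ s ∈ range (ℓ k + 1), 0 ≤ θ k s) ∧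
  -- (1)
  (∀ (k : K), ∀ s ∈ Icc 1 (ℓ k), ∑ v ∈ V, x v s k = 1) ∧
  -- (2)
  (∀ v ∈ V, ∀ (k : K), ∀ s ∈ Icc 1 (ℓ k), x v s k ≤ y v) ∧
  -- (3)
  (∀ v ∈ V, ∑ k, ∑ s ∈ Icc 1 (ℓ k), lam k s * x v s k ≤ μ v * y v) ∧
  -- (4)
  (∀ (k : K), ∀ s ∈ range (ℓ k + 1), ∑ p ∈ Icc 1 P, r k s p = 1) ∧
  -- (5)
  (∀ e ∈ L, ∀ (k : K), ∀ s ∈ range (ℓ k + 1), ∀ p ∈ Icc 1 P,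
    r' e k s p = r k s p * z e k s p) ∧
  -- (6)
  (∀ e ∈ L,
    ∑ k, ∑ s ∈ range (ℓ k + 1), ∑ p ∈ Icc 1 P, lam k s * r' e k s p ≤ C e) ∧
  -- (7)
  (∀ (i : I), ∀ (k : K), ∀ s ∈ range (ℓ k + 1), ∀ p ∈ Icc 1 P,
    (∑ e ∈ L.filter (fun e => e.2 = i), z e k s p)
      - (∑ e ∈ L.filter (fun e => e.1 = i), z e k s p)
      = flowRHS V ℓ xB xE x i k s) ∧
  -- (8)
  (∀ (k : K), ∀ s ∈ range (ℓ k + 1), ∀ p ∈ Icc 1 P,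
    ∑ e ∈ L, d e * z e k s p ≤ θ k s) ∧
  -- (9)
  (∀ k : K, thetaN V ℓ dN x k + thetaL ℓ θ k ≤ Θ k)

/-- Feasibility of `(x, y, z̄, θ)` for the compact LP relaxation (NS-LP): `x`, `y`, `z̄`
take values in `[0,1]`, `θ ≥ 0`, and constraints (1)–(3), (6'), (7'), (8'), (9) hold. -/
def NSLPFeasible {I K : Type} [Fintype I] [DecidableEq I] [Fintype K]
    (L : Finset (I × I)) (V : Finset I)
    (ℓ : K → ℕ) (lam : K → ℕ → ℝ) (Θ : K → ℝ)
    (μ : I → ℝ) (C : I × I → ℝ) (d : I × I → ℝ) (dN : I → ℕ → K → ℝ)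
    (xB xE : I → K → ℝ)
    (x : I → ℕ → K → ℝ) (y : I → ℝ)
    (zbar : I × I → K → ℕ → ℝ) (θ : K → ℕ → ℝ) : Prop :=
  (∀ v ∈ V, ∀ (k : K), ∀ s ∈ Icc 1 (ℓ k), x v s k ∈ Set.Icc (0 : ℝ) 1) ∧
  (∀ v ∈ V, y v ∈ Set.Icc (0 : ℝ) 1) ∧
  (∀ e ∈ L, ∀ (k : K), ∀ s ∈ range (ℓ k + 1), zbar e k s ∈ Set.Icc (0 : ℝ) 1) ∧
  (∀ (k : K), ∀ s ∈ range (ℓ k + 1), 0 ≤ θ k s) ∧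
  -- (1)
  (∀ (k : K), ∀ s ∈ Icc 1 (ℓ k), ∑ v ∈ V, x v s k = 1) ∧
  -- (2)
  (∀ v ∈ V, ∀ (k : K), ∀ s ∈ Icc 1 (ℓ k), x v s k ≤ y v) ∧
  -- (3)
  (∀ v ∈ V, ∑ k, ∑ s ∈ Icc 1 (ℓ k), lam k s * x v s k ≤ μ v * y v) ∧
  -- (6')
  (∀ e ∈ L, ∑ k, ∑ s ∈ range (ℓ k + 1), lam k s * zbar e k s ≤ C e) ∧
  -- (7')
  (∀ (i : I), ∀ (k : K), ∀ s ∈ range (ℓ k + 1),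
    (∑ e ∈ L.filter (fun e => e.2 = i), zbar e k s)
      - (∑ e ∈ L.filter (fun e => e.1 = i), zbar e k s)
      = flowRHS V ℓ xB xE x i k s) ∧
  -- (8')
  (∀ (k : K), ∀ s ∈ range (ℓ k + 1), ∑ e ∈ L, d e * zbar e k s ≤ θ k s) ∧
  -- (9)
  (∀ k : K, thetaN V ℓ dN x k + thetaL ℓ θ k ≤ Θ k)

/-- Theorem 2 of the paper: for any integer `P ≥ 1`, the optimal value
(infimum of the objective over the feasible set, taken in `EReal` so that an infeasible
problem has value `+∞`) of the compact LP relaxation (NS-LP) is at most the optimal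
value of the network slicing problem (NS) with path set `{1,…,P}`; i.e. (NS-LP) is a
relaxation of (NS) for any `P ≥ 1`. -/
theorem nslp_is_relaxation_of_ns
    {I K : Type} [Fintype I] [DecidableEq I] [Fintype K]
    (L : Finset (I × I)) (V : Finset I)
    (ℓ : K → ℕ) (lam : K → ℕ → ℝ) (Θ : K → ℝ)
    (μ : I → ℝ) (C : I × I → ℝ) (d : I × I → ℝ) (dN : I → ℕ → K → ℝ)
    (σ : ℝ) (P : ℕ) (hP : 1 ≤ P)
    (xB xE : I → K → ℝ)
    -- nonnegativity of the problem data
    (hlam : ∀ (k : K), ∀ s ∈ range (ℓ k + 1), 0 ≤ lam k s)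
    (hμ : ∀ v ∈ V, 0 ≤ μ v)
    (hC : ∀ e ∈ L, 0 ≤ C e)
    (hd : ∀ e ∈ L, 0 ≤ d e)
    (hdN : ∀ v ∈ V, ∀ (k : K), ∀ s ∈ Icc 1 (ℓ k), 0 ≤ dN v s k)
    (hσ : 0 ≤ σ) :
    sInf {w : EReal | ∃ x y zbar θ,
        NSLPFeasible L V ℓ lam Θ μ C d dN xB xE x y zbar θ ∧
        w = (nsObjective V ℓ dN σ x y θ : ℝ)}
      ≤ sInf {w : EReal | ∃ x y r r' z θ,
        NSFeasible L V ℓ lam Θ μ C d dN P xB xE x y r r' z θ ∧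
        w = (nsObjective V ℓ dN σ x y θ : ℝ)} :=  by
  apply sInf_le_sInf
  rintro w ⟨x, y, r, r', z, θ, ⟨hxb, hyb, hzb, hr0, hr'0, hθ0, h1, h2, h3, h4, h5, h6, h7, h8, h9⟩, rfl⟩
  refine ⟨x, y, fun e k s => ∑ p ∈ Icc 1 P, r k s p * z e k s p, θ, ?_, rfl⟩
  refine ⟨?_, ?_, ?_, hθ0, h1, h2, h3, ?_, ?_, ?_, h9⟩
  · intro v hv k s hs
    rcases hxb v hv k s hs with h | h <;> simp [h]
  · intro v hv
    rcases hyb v hv with h | h <;> simp [h]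
  · intro e he k s hs
    constructor
    · apply Finset.sum_nonneg
      intro p hp
      have hz := hzb e he k s hs p hp
      have hr := hr0 k s hs p hp
      rcases hz with h | h <;> simp [h] <;> positivity
    · calc ∑ p ∈ Icc 1 P, r k s p * z e k s p
          ≤ ∑ p ∈ Icc 1 P, r k s p * 1 := by
            apply Finset.sum_le_sum
            intro p hp
            apply mul_le_mul_of_nonneg_left _ (hr0 k s hs p hp)
            rcases hzb e he k s hs p hp with h | h <;> simp [h]
        _ = 1 := by simp [h4 k s hs]
  · -- (6')
    intro e he
    calc ∑ k, ∑ s ∈ range (ℓ k + 1), lam k s * ∑ p ∈ Icc 1 P, r k s p * z e k s p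
        = ∑ k, ∑ s ∈ range (ℓ k + 1), ∑ p ∈ Icc 1 P, lam k s * r' e k s p := by
          apply Finset.sum_congr rfl; intro k _
          apply Finset.sum_congr rfl; intro s hs
          rw [Finset.mul_sum]
          apply Finset.sum_congr rfl; intro p hp
          rw [h5 e he k s hs p hp]
      _ ≤ C e := h6 e he
  · -- (7')
    intro i k s hs
    have key : ∀ S : Finset (I × I),
        (∑ e ∈ S, ∑ p ∈ Icc 1 P, r k s p * z e k s p)
          = ∑ p ∈ Icc 1 P, r k s p * ∑ e ∈ S, z e k s p := by
      intro S
      rw [Finset.sum_comm]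
      exact Finset.sum_congr rfl fun p _ => (Finset.mul_sum _ _ _).symm
    rw [key, key, ← Finset.sum_sub_distrib]
    have : ∀ p ∈ Icc 1 P,
        r k s p * (∑ e ∈ L.filter (fun e => e.2 = i), z e k s p)
          - r k s p * (∑ e ∈ L.filter (fun e => e.1 = i), z e k s p)
          = r k s p * flowRHS V ℓ xB xE x i k s := by
      intro p hp
      rw [← mul_sub, h7 i k s hs p hp]
    rw [Finset.sum_congr rfl this, ← Finset.sum_mul, h4 k s hs, one_mul]
  · -- (8')
    intro k s hs
    have key : (∑ e ∈ L, d e * ∑ p ∈ Icc 1 P, r k s p * z e k s p)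
        = ∑ p ∈ Icc 1 P, r k s p * ∑ e ∈ L, d e * z e k s p := by
      calc ∑ e ∈ L, d e * ∑ p ∈ Icc 1 P, r k s p * z e k s p
          = ∑ e ∈ L, ∑ p ∈ Icc 1 P, d e * (r k s p * z e k s p) :=
            Finset.sum_congr rfl fun e _ => Finset.mul_sum _ _ _
        _ = ∑ p ∈ Icc 1 P, ∑ e ∈ L, d e * (r k s p * z e k s p) := Finset.sum_comm
        _ = ∑ p ∈ Icc 1 P, r k s p * ∑ e ∈ L, d e * z e k s p := by
            apply Finset.sum_congr rfl; intro p _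
            rw [Finset.mul_sum]
            apply Finset.sum_congr rfl; intro e _
            ring
    · rw [key]
      calc ∑ p ∈ Icc 1 P, r k s p * ∑ e ∈ L, d e * z e k s p
          ≤ ∑ p ∈ Icc 1 P, r k s p * θ k s := by
            apply Finset.sum_le_sum
            intro p hp
            exact mul_le_mul_of_nonneg_left (h8 k s hs p hp) (hr0 k s hs p hp)
        _ = θ k s := by rw [← Finset.sum_mul, h4 k s hs, one_mul]
end
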